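/- arXiv:2302.02155 — 2 statements merged into one kernel-verified Lean document; each statement's English description precedes it below -/
import Mathlib

section
/- Best low-rank approximation in blocks: if C = bdiag(A₁,…,Aₙ) is block diagonal and each Aᵢ_k is the best Frobenius rank-k approximation of Aᵢ, then bdiag(A₁_k,…,Aₙ_k) has rank at most n·k and satisfies ‖C − bdiag(A₁_k,…,Aₙ_k)‖_F² = Σᵢ ‖Aᵢ − Aᵢ_k‖_F² ≤ ‖C − C_k'‖_F² for any block diagonal C' whose blocks each have rank ≤ k. -/
open Matrix

/-- The Frobenius norm of a real matrix. -/
noncomputable def frobNorm {α β : Type*} [Fintype α] [Fintype β]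
    (A : Matrix α β ℝ) : ℝ :=
  Real.sqrt (∑ i, ∑ j, (A i j) ^ 2)

/-!
The Frobenius norm squared of a block diagonal matrix is the sum of the squared norms of its
blocks, so the approximation error of `bdiag (Ak)` splits blockwise and each summand is minimal
by the optimality of `Ak i`. The rank bound comes from writing `bdiag (Ak)` as the sum of the
`N` matrices carrying a single block, each of which factors through that block.
-/

section FrobNorm

variable {m n o : Type*} [Fintype m] [Fintype n] [Fintype o] [DecidableEq o]

lemma frobNorm_nonneg (A : Matrix m n ℝ) : 0 ≤ frobNorm A := Real.sqrt_nonneg _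

lemma frobNorm_sq (A : Matrix m n ℝ) : frobNorm A ^ 2 = ∑ i, ∑ j, A i j ^ 2 :=
  Real.sq_sqrt <| Finset.sum_nonneg fun _ _ => Finset.sum_nonneg fun _ _ => sq_nonneg _

lemma frobNorm_blockDiagonal_sq (M : o → Matrix m n ℝ) :
    frobNorm (blockDiagonal M) ^ 2 = ∑ k, frobNorm (M k) ^ 2 := by
  simp only [frobNorm_sq]
  rw [← Finset.univ_product_univ, Finset.sum_product, Finset.sum_comm]
  refine Finset.sum_congr rfl fun k _ => Finset.sum_congr rfl fun i _ => ?_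
  rw [← Finset.univ_product_univ, Finset.sum_product, Finset.sum_comm]
  simp [blockDiagonal_apply, eq_comm]

end FrobNorm

section Rank

variable {K : Type*} [Field K] {m n : Type*} [Fintype n]

lemma Matrix.rank_add_le (A B : Matrix m n K) : (A + B).rank ≤ A.rank + B.rank := by
  rw [rank, rank, rank, mulVecLin_add]
  have hrange : LinearMap.range (A.mulVecLin + B.mulVecLin) ≤
      LinearMap.range A.mulVecLin ⊔ LinearMap.range B.mulVecLin := by
    rintro _ ⟨v, rfl⟩
    exact Submodule.add_mem_sup ⟨v, rfl⟩ ⟨v, rfl⟩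
  exact (Submodule.finrank_mono hrange).trans (Submodule.finrank_add_le_finrank_add_finrank _ _)

lemma Matrix.rank_sum_le {ι : Type*} (s : Finset ι) (f : ι → Matrix m n K) :
    (∑ i ∈ s, f i).rank ≤ ∑ i ∈ s, (f i).rank := by
  classical
  induction s using Finset.induction with
  | empty => simp [rank_zero]
  | insert i s hi ih =>
    rw [Finset.sum_insert hi, Finset.sum_insert hi]
    exact (rank_add_le _ _).trans (Nat.add_le_add_left ih _)

variable [Fintype m] {o : Type*} [DecidableEq o]

lemma Matrix.blockDiagonal_single_eq_mul [DecidableEq m] [DecidableEq n] (k : o)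
    (B : Matrix m n K) :
    blockDiagonal (Pi.single k B) =
      (of fun (x : m × o) i => if x = (i, k) then (1 : K) else 0) * B *
        of fun j (y : n × o) => if y = (j, k) then (1 : K) else 0 := by
  ext ⟨i, a⟩ ⟨j, b⟩
  simp only [mul_apply, of_apply, Prod.mk.injEq, mul_ite, mul_one, mul_zero, ite_mul, one_mul,
    zero_mul, blockDiagonal_apply, Pi.single_apply, ite_and, Finset.sum_ite_eq]
  by_cases ha : a = k <;> by_cases hb : b = k <;> simp_all [eq_comm]

lemma Matrix.rank_blockDiagonal_single_le [Fintype o] (k : o) (B : Matrix m n K) :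
    (blockDiagonal (Pi.single k B)).rank ≤ B.rank := by
  classical
  rw [blockDiagonal_single_eq_mul]
  exact (rank_mul_le_left _ _).trans (rank_mul_le_right _ _)

lemma Matrix.rank_blockDiagonal_le [Fintype o] (M : o → Matrix m n K) :
    (blockDiagonal M).rank ≤ ∑ k, (M k).rank := by
  have hsum : blockDiagonal M = ∑ k, blockDiagonal (Pi.single k (M k)) := by
    simpa [Finset.univ_sum_single] using
      (map_sum (blockDiagonalAddMonoidHom m n o K) (fun k => Pi.single k (M k)) Finset.univ)
  rw [hsum]
  exact (rank_sum_le _ _).trans (Finset.sum_le_sum fun k _ => rank_blockDiagonal_single_le k (M k))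

end Rank

/-- Best low-rank approximation in blocks: if each `Ak i` is a best Frobenius
rank-`k` approximation of `A i`, then `bdiag (Ak)` has rank at most `N·k`, the
squared block-diagonal error is the sum of the blockwise squared errors, and
`bdiag (Ak)` beats any block diagonal matrix whose blocks have rank `≤ k`. -/
theorem blockDiagonal_best_lowrank_approx {N p q k : ℕ}
    (A Ak : Fin N → Matrix (Fin p) (Fin q) ℝ)
    (hrank : ∀ i, (Ak i).rank ≤ k)
    (hbest : ∀ i, ∀ B : Matrix (Fin p) (Fin q) ℝ, B.rank ≤ k →
      frobNorm (A i - Ak i) ≤ frobNorm (A i - B)) :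
    (Matrix.blockDiagonal Ak).rank ≤ N * k ∧
      frobNorm (Matrix.blockDiagonal A - Matrix.blockDiagonal Ak) ^ 2 =
        ∑ i, frobNorm (A i - Ak i) ^ 2 ∧
      ∀ C' : Fin N → Matrix (Fin p) (Fin q) ℝ, (∀ i, (C' i).rank ≤ k) →
        frobNorm (Matrix.blockDiagonal A - Matrix.blockDiagonal Ak) ≤
          frobNorm (Matrix.blockDiagonal A - Matrix.blockDiagonal C') := by
  have herror (M : Fin N → Matrix (Fin p) (Fin q) ℝ) :
      frobNorm (blockDiagonal A - blockDiagonal M) ^ 2 = ∑ i, frobNorm (A i - M i) ^ 2 := by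
    rw [← blockDiagonal_sub, frobNorm_blockDiagonal_sq]
    rfl
  refine ⟨?_, herror Ak, fun C' hC' => ?_⟩
  · calc (blockDiagonal Ak).rank ≤ ∑ i, (Ak i).rank := rank_blockDiagonal_le Ak
      _ ≤ ∑ _i : Fin N, k := Finset.sum_le_sum fun i _ => hrank i
      _ = N * k := by simp
  · refine (pow_le_pow_iff_left₀ (frobNorm_nonneg _) (frobNorm_nonneg _) two_ne_zero).mp ?_
    rw [herror, herror]
    exact Finset.sum_le_sum fun i _ =>
      pow_le_pow_left₀ (frobNorm_nonneg _) (hbest i (C' i) (hC' i)) 2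
end

section
/- Subgradient of the nuclear norm: if A ∈ ℝ^{m×n} has reduced SVD A = UΣVᵀ with Σ invertible (positive singular values), then for any matrix W of the form UVᵀ + Z with UᵀZ = 0, ZV = 0, and spectral norm ‖Z‖ ≤ 1, and for any B ∈ ℝ^{m×n}, ‖B‖_* ≥ ‖A‖_* + ⟨W, B − A⟩. -/
open Matrix

/-- The nuclear norm of a real matrix. -/
noncomputable def nuclearNorm {m n : ℕ} (A : Matrix (Fin m) (Fin n) ℝ) : ℝ :=
  ∑ i, Real.sqrt ((show (Aᵀ * A).IsHermitian by
    simpa using Matrix.isHermitian_conjTranspose_mul_self A).eigenvalues i)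

/-- The spectral (ℓ2 operator) norm of a real matrix. -/
noncomputable def specNorm {m n : ℕ} (A : Matrix (Fin m) (Fin n) ℝ) : ℝ :=
  ⨆ x : {x : EuclideanSpace ℝ (Fin n) // ‖x‖ ≤ 1},
    ‖(WithLp.equiv 2 (Fin m → ℝ)).symm (A.mulVec ((WithLp.equiv 2 (Fin n → ℝ)) x.1))‖

/-!
Write `‖·‖` for the spectral norm. Von Neumann's trace inequality in its simplest form,
`⟨W, C⟩ ≤ ‖W‖ ‖C‖_*`, follows by evaluating the trace in an orthonormal eigenbasis `bᵢ` of `CᵀC`: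
`⟨W, C⟩ = ∑ ⟪W bᵢ, C bᵢ⟫ ≤ ‖W‖ ∑ ‖C bᵢ‖` and `‖C bᵢ‖ = √λᵢ`. The conditions on `Z` make
`W = UVᵀ + Z` a contraction, since `W x = U (Vᵀ x) + Z (x - V Vᵀ x)` is an orthogonal sum.
Finally `Wᵀ A = V Σ Vᵀ` is the positive square root of `AᵀA`, so `⟨W, A⟩ = tr Σ = ‖A‖_*`, and
`⟨W, B - A⟩ = ⟨W, B⟩ - ‖A‖_* ≤ ‖B‖_* - ‖A‖_*`.
-/

open scoped Matrix.Norms.L2Operator InnerProductSpace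

lemma specNorm_eq_l2_opNorm {m n : ℕ} (A : Matrix (Fin m) (Fin n) ℝ) : specNorm A = ‖A‖ := by
  rw [l2_opNorm_def, ← ContinuousLinearMap.sSup_unitClosedBall_eq_norm, sSup_image', specNorm]
  exact (Equiv.subtypeEquivRight fun x => mem_closedBall_zero_iff.symm).iSup_congr fun _ => rfl

lemma nuclearNorm_nonneg {m n : ℕ} (A : Matrix (Fin m) (Fin n) ℝ) : 0 ≤ nuclearNorm A :=
  Finset.sum_nonneg fun _ _ => Real.sqrt_nonneg _

namespace Matrix

section EuclideanLin

variable {l m n r : Type*} [Fintype m] [Fintype n] [Fintype r] [DecidableEq n]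

lemma norm_toEuclideanLin_le (A : Matrix m n ℝ) (x : EuclideanSpace ℝ n) :
    ‖A.toEuclideanLin x‖ ≤ ‖A‖ * ‖x‖ :=
  ((toEuclideanLin ≪≫ₗ LinearMap.toContinuousLinearMap) A).le_opNorm x

variable [DecidableEq m]

lemma inner_toEuclideanLin_left (A : Matrix m n ℝ) (x : EuclideanSpace ℝ n)
    (y : EuclideanSpace ℝ m) : ⟪A.toEuclideanLin x, y⟫_ℝ = ⟪x, Aᵀ.toEuclideanLin y⟫_ℝ := by
  rw [← conjTranspose_eq_transpose_of_trivial, toEuclideanLin_conjTranspose_eq_adjoint,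
    LinearMap.adjoint_inner_right]

lemma inner_toEuclideanLin_toEuclideanLin [Fintype l] [DecidableEq l] (A : Matrix m n ℝ)
    (B : Matrix m l ℝ) (x : EuclideanSpace ℝ n) (y : EuclideanSpace ℝ l) :
    ⟪A.toEuclideanLin x, B.toEuclideanLin y⟫_ℝ = ⟪x, (Aᵀ * B).toEuclideanLin y⟫_ℝ := by
  rw [inner_toEuclideanLin_left, toLpLin_mul_same, LinearMap.comp_apply]

lemma trace_eq_sum_inner (M : Matrix n n ℝ) (b : OrthonormalBasis n ℝ (EuclideanSpace ℝ n)) :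
    M.trace = ∑ i, ⟪b i, M.toEuclideanLin (b i)⟫_ℝ := by
  rw [← LinearMap.trace_eq_sum_inner]
  exact (M.trace_toLin_eq (PiLp.basisFun 2 ℝ n)).symm

lemma norm_toEuclideanLin_eigenvectorBasis (C : Matrix m n ℝ) (hC : (Cᵀ * C).IsHermitian)
    (i : n) : ‖C.toEuclideanLin (hC.eigenvectorBasis i)‖ = √(hC.eigenvalues i) := by
  have hb : (Cᵀ * C).toEuclideanLin (hC.eigenvectorBasis i) =
      hC.eigenvalues i • hC.eigenvectorBasis i := by
    rw [toLpLin_apply, hC.mulVec_eigenvectorBasis]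
    rfl
  rw [← Real.sqrt_sq (norm_nonneg _), ← real_inner_self_eq_norm_sq,
    inner_toEuclideanLin_toEuclideanLin, hb, real_inner_smul_right, real_inner_self_eq_norm_sq,
    hC.eigenvectorBasis.norm_eq_one, one_pow, mul_one]

variable [DecidableEq r]

lemma norm_toEuclideanLin_of_transpose_mul_self_eq_one {U : Matrix m r ℝ} (hU : Uᵀ * U = 1)
    (x : EuclideanSpace ℝ r) : ‖U.toEuclideanLin x‖ = ‖x‖ := by
  rw [norm_eq_sqrt_real_inner, norm_eq_sqrt_real_inner, inner_toEuclideanLin_toEuclideanLin, hU,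
    toLpLin_one, LinearMap.id_apply]

lemma l2_opNorm_mul_transpose_add_le_one {U : Matrix m r ℝ} {V : Matrix n r ℝ}
    {Z : Matrix m n ℝ} (hU : Uᵀ * U = 1) (hV : Vᵀ * V = 1) (hZU : Uᵀ * Z = 0)
    (hZV : Z * V = 0) (hZ : ‖Z‖ ≤ 1) : ‖U * Vᵀ + Z‖ ≤ 1 := by
  refine ContinuousLinearMap.opNorm_le_bound _ zero_le_one fun x => ?_
  set a := Vᵀ.toEuclideanLin x
  set y := x - V.toEuclideanLin a
  have hWx : (U * Vᵀ + Z).toEuclideanLin x = U.toEuclideanLin a + Z.toEuclideanLin y := by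
    have hZVa : Z.toEuclideanLin (V.toEuclideanLin a) = 0 := by
      rw [← LinearMap.comp_apply, ← toLpLin_mul_same, hZV, map_zero, LinearMap.zero_apply]
    simp [y, a, hZVa]
  have hVy : Vᵀ.toEuclideanLin y = 0 := by
    rw [map_sub, ← LinearMap.comp_apply, ← toLpLin_mul_same, hV, toLpLin_one,
      LinearMap.id_apply, sub_self]
  have hx : ‖x‖ * ‖x‖ = ‖a‖ * ‖a‖ + ‖y‖ * ‖y‖ := by
    have hVay : ⟪V.toEuclideanLin a, y⟫_ℝ = 0 := by
      rw [inner_toEuclideanLin_left, hVy, inner_zero_right]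
    rw [← norm_toEuclideanLin_of_transpose_mul_self_eq_one hV a,
      ← norm_add_sq_eq_norm_sq_add_norm_sq_real hVay, add_sub_cancel]
  have hWx' : ‖(U * Vᵀ + Z).toEuclideanLin x‖ * ‖(U * Vᵀ + Z).toEuclideanLin x‖ =
      ‖a‖ * ‖a‖ + ‖Z.toEuclideanLin y‖ * ‖Z.toEuclideanLin y‖ := by
    have hUZ : ⟪U.toEuclideanLin a, Z.toEuclideanLin y⟫_ℝ = 0 := by
      rw [inner_toEuclideanLin_toEuclideanLin, hZU, map_zero, LinearMap.zero_apply,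
        inner_zero_right]
    rw [hWx, norm_add_sq_eq_norm_sq_add_norm_sq_real hUZ,
      norm_toEuclideanLin_of_transpose_mul_self_eq_one hU]
  have hZy : ‖Z.toEuclideanLin y‖ ≤ ‖y‖ :=
    (norm_toEuclideanLin_le Z y).trans (mul_le_of_le_one_left (norm_nonneg y) hZ)
  show ‖(U * Vᵀ + Z).toEuclideanLin x‖ ≤ 1 * ‖x‖
  rw [one_mul, mul_self_le_mul_self_iff (norm_nonneg _) (norm_nonneg _), hWx', hx]
  gcongr

end EuclideanLin

lemma trace_mul_mul_transpose {n r : Type*} [Fintype n] [Fintype r] [DecidableEq r]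
    {V : Matrix n r ℝ} (hV : Vᵀ * V = 1) (S : Matrix r r ℝ) : (V * S * Vᵀ).trace = S.trace := by
  rw [trace_mul_comm, ← Matrix.mul_assoc, hV, Matrix.one_mul]

end Matrix

lemma trace_transpose_mul_le_l2_opNorm_mul_nuclearNorm {m n : ℕ} (W C : Matrix (Fin m) (Fin n) ℝ) :
    (Wᵀ * C).trace ≤ ‖W‖ * nuclearNorm C := by
  have hC : (Cᵀ * C).IsHermitian := by
    simpa using isHermitian_conjTranspose_mul_self C
  set b := hC.eigenvectorBasis
  calc (Wᵀ * C).trace = ∑ i, ⟪W.toEuclideanLin (b i), C.toEuclideanLin (b i)⟫_ℝ := by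
        simp only [trace_eq_sum_inner _ b, inner_toEuclideanLin_toEuclideanLin]
    _ ≤ ∑ i, ‖W‖ * ‖C.toEuclideanLin (b i)‖ := by
        gcongr with i
        calc _ ≤ ‖W.toEuclideanLin (b i)‖ * ‖C.toEuclideanLin (b i)‖ := real_inner_le_norm _ _
          _ ≤ ‖W‖ * ‖C.toEuclideanLin (b i)‖ := by
            gcongr
            simpa [b.norm_eq_one] using norm_toEuclideanLin_le W (b i)
    _ = ‖W‖ * nuclearNorm C := by
        simp only [← Finset.mul_sum, b, norm_toEuclideanLin_eigenvectorBasis, nuclearNorm]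

lemma nuclearNorm_eq_trace_of_mul_self_eq {m n : ℕ} (A : Matrix (Fin m) (Fin n) ℝ)
    {P : Matrix (Fin n) (Fin n) ℝ} (hP : P.PosSemidef) (hPA : P * P = Aᵀ * A) :
    nuclearNorm A = P.trace := by
  have hAA : (Aᴴ * A).PosSemidef := posSemidef_conjTranspose_mul_self A
  have hsqrt : P = hAA.1.cfc Real.sqrt := by
    open scoped MatrixOrder in
    rw [← hAA.1.cfc_eq, ← cfcₙ_eq_cfc (f := Real.sqrt) (a := Aᴴ * A) (hf0 := Real.sqrt_zero),
      ← CFC.sqrt_eq_real_sqrt _ hAA.nonneg, eq_comm, CFC.sqrt_eq_iff _ _ hAA.nonneg hP.nonneg,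
      hPA, conjTranspose_eq_transpose_of_trivial]
  rw [hsqrt, IsHermitian.cfc, Unitary.conjStarAlgAut_apply, trace_mul_cycle,
    Unitary.coe_star_mul_self, one_mul, trace_diagonal, nuclearNorm]
  simp only [RCLike.ofReal_real_eq_id, Function.comp_apply, conjTranspose_eq_transpose_of_trivial,
    id_eq]

lemma nuclearNorm_mul_mul_transpose {m n : ℕ} {r : Type*} [Fintype r] [DecidableEq r]
    {U : Matrix (Fin m) r ℝ} {V : Matrix (Fin n) r ℝ} {S : Matrix r r ℝ}
    (hU : Uᵀ * U = 1) (hV : Vᵀ * V = 1) (hS : S.PosSemidef) :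
    nuclearNorm (U * S * Vᵀ) = S.trace := by
  have hSt : Sᵀ = S := hS.1
  have hP : (V * S * Vᵀ).PosSemidef := by
    simpa using hS.mul_mul_conjTranspose_same V
  have hPA : V * S * Vᵀ * (V * S * Vᵀ) = (U * S * Vᵀ)ᵀ * (U * S * Vᵀ) := by
    simp only [transpose_mul, transpose_transpose, hSt, Matrix.mul_assoc]
    rw [← Matrix.mul_assoc Vᵀ V, ← Matrix.mul_assoc Uᵀ U, hU, hV, Matrix.one_mul]
  rw [nuclearNorm_eq_trace_of_mul_self_eq _ hP hPA, trace_mul_mul_transpose hV]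

/-- Subgradient of the nuclear norm: if `A = U Σ Vᵀ` is a reduced SVD with
positive singular values, then every `W = U Vᵀ + Z` with `UᵀZ = 0`, `Z V = 0`
and `‖Z‖ ≤ 1` is a subgradient of `‖·‖_*` at `A`:
`‖B‖_* ≥ ‖A‖_* + ⟨W, B − A⟩` for all `B`. -/
theorem nuclearNorm_subgradient {m n r : ℕ}
    (A : Matrix (Fin m) (Fin n) ℝ)
    (U : Matrix (Fin m) (Fin r) ℝ) (V : Matrix (Fin n) (Fin r) ℝ)
    (S : Matrix (Fin r) (Fin r) ℝ)
    (hU : Uᵀ * U = 1) (hV : Vᵀ * V = 1)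
    (hSdiag : ∀ i j : Fin r, i ≠ j → S i j = 0)
    (hSpos : ∀ i : Fin r, 0 < S i i)
    (hA : A = U * S * Vᵀ)
    (Z W : Matrix (Fin m) (Fin n) ℝ)
    (hZU : Uᵀ * Z = 0) (hZV : Z * V = 0) (hZnorm : specNorm Z ≤ 1)
    (hW : W = U * Vᵀ + Z) :
    ∀ B : Matrix (Fin m) (Fin n) ℝ,
      nuclearNorm B ≥ nuclearNorm A + (Wᵀ * (B - A)).trace := by
  intro B
  have hS : S.PosSemidef := by
    have hSd : S = diagonal fun i => S i i := by
      ext i j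
      rcases eq_or_ne i j with rfl | hij
      · simp
      · simp [hij, hSdiag i j hij]
    exact hSd ▸ PosSemidef.diagonal fun i => (hSpos i).le
  have hWA : Wᵀ * A = V * S * Vᵀ := by
    have hZtU : Zᵀ * U = 0 := by simpa using congrArg transpose hZU
    rw [hW, hA, transpose_add, transpose_mul, transpose_transpose, Matrix.add_mul,
      Matrix.mul_assoc V, ← Matrix.mul_assoc Uᵀ, ← Matrix.mul_assoc Uᵀ, hU, Matrix.one_mul,
      ← Matrix.mul_assoc Zᵀ, ← Matrix.mul_assoc Zᵀ, hZtU, Matrix.zero_mul, Matrix.zero_mul,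
      add_zero, Matrix.mul_assoc]
  have hW1 : ‖W‖ ≤ 1 :=
    hW ▸ l2_opNorm_mul_transpose_add_le_one hU hV hZU hZV (specNorm_eq_l2_opNorm Z ▸ hZnorm)
  calc nuclearNorm A + (Wᵀ * (B - A)).trace = (Wᵀ * B).trace := by
        rw [Matrix.mul_sub, trace_sub, hWA, trace_mul_mul_transpose hV, hA,
          nuclearNorm_mul_mul_transpose hU hV hS, add_sub_cancel]
    _ ≤ ‖W‖ * nuclearNorm B := trace_transpose_mul_le_l2_opNorm_mul_nuclearNorm W B
    _ ≤ nuclearNorm B := mul_le_of_le_one_left (nuclearNorm_nonneg B) hW1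
end
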